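/- arXiv:2601.06265 — 2 statements merged into one kernel-verified Lean document; each statement's English description precedes it below -/
import Mathlib

section
/- The quantity S_Q(ε) = (4/√2)(ε−1)ε² − (2/√2)ε⁴ + 2ε² is strictly negative for all ε with 0 < ε < 1 − √(√2 − 1), and S_Q(ε) = 0 at ε = 1 − √(√2 − 1). -/
/-! Since `2 / √2 = √2`, completing the square gives `S_Q(ε) = √2 ε² ((√2 - 1) - (1 - ε)²)`;
the last factor is negative once `1 - ε > √(√2 - 1)` and vanishes at equality. -/

/-- The quantum value S_Q(ε) of the interventional Fritz expression. -/
noncomputable def SQ (ε : ℝ) : ℝ :=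
  (4 / Real.sqrt 2) * (ε - 1) * ε ^ 2 - (2 / Real.sqrt 2) * ε ^ 4 + 2 * ε ^ 2

open Real

lemma SQ_eq_mul_sub_sq (ε : ℝ) : SQ ε = √2 * ε ^ 2 * (√2 - 1 - (1 - ε) ^ 2) := by
  have hsq : √2 ^ 2 = 2 := sq_sqrt zero_le_two
  have hdiv : 2 / √2 = √2 := by rw [div_eq_iff (by positivity), ← sq, hsq]
  have hdiv4 : 4 / √2 = 2 * √2 := by rw [← hdiv, mul_div_assoc']; norm_num
  rw [SQ, hdiv4, hdiv]
  linear_combination -ε ^ 2 * hsq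

lemma sqrt_two_sub_one_nonneg : 0 ≤ √2 - 1 := by
  rw [sub_nonneg, one_le_sqrt]
  exact one_le_two

lemma SQ_neg_of_sqrt_lt {ε : ℝ} (hε : ε ≠ 0) (h : √(√2 - 1) < 1 - ε) : SQ ε < 0 := by
  have hgap : √2 - 1 < (1 - ε) ^ 2 := (sqrt_lt' ((sqrt_nonneg _).trans_lt h)).1 h
  rw [SQ_eq_mul_sub_sq]
  exact mul_neg_of_pos_of_neg (by positivity) (sub_neg.2 hgap)

/-- S_Q is strictly negative on (0, 1 − √(√2 − 1)) and vanishes at the endpoint. -/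
theorem SQ_neg_iff :
    (∀ ε : ℝ, 0 < ε → ε < 1 - Real.sqrt (Real.sqrt 2 - 1) → SQ ε < 0) ∧
      SQ (1 - Real.sqrt (Real.sqrt 2 - 1)) = 0 := by
  refine ⟨fun ε hε hlt => SQ_neg_of_sqrt_lt hε.ne' (by linarith), ?_⟩
  rw [SQ_eq_mul_sub_sq, sub_sub_cancel, sq_sqrt sqrt_two_sub_one_nonneg, sub_self, mul_zero]
end

section
/- Let ρ₁, ..., ρ_m be density matrices on finite-dimensional Hilbert spaces and let A_l be a party whose Hilbert space is a tensor factor of the spaces of a subset S of sources. If each source ρ_i with i ∈ S is replaced by σ_{i} ⊗ Tr_{A_l}(ρ_i) where σ_i is the marginal of ρ_i on the A_l factor, then the resulting global state equals Tr_{A_l}(⊗_i ρ_i) ⊗ (⊗_{i∈S} σ_i). In particular, for any POVM element E_{a_l} on A_l's total space and POVM elements E_{a_j} on the remaining parties' spaces, the resulting outcome probability equals Tr(Tr_{A_l}(⊗_i ρ_i) · ⊗_{j≠l} E_{a_j}) · Tr((⊗_{i∈S} σ_i) · E_{a_l}). -/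
open ComplexOrder

/-- Trace out the first (X, i.e. the A_l) factor of a bipartite source. -/
noncomputable def trXfac {X Y : Type} [Fintype X]
    (ρ : Matrix (X × Y) (X × Y) ℂ) : Matrix Y Y ℂ :=
  Matrix.of fun y y' => ∑ x, ρ (x, y) (x, y')

/-- Trace out the second (Y, i.e. the rest) factor of a bipartite source,
giving the marginal σ on the A_l factor. -/
noncomputable def trYfac {X Y : Type} [Fintype Y]
    (ρ : Matrix (X × Y) (X × Y) ℂ) : Matrix X X ℂ :=
  Matrix.of fun x x' => ∑ y, ρ (x, y) (x', y)

/-- The original global state ⊗ᵢ ρᵢ ⊗ τ of the two-layer network (τ collects the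
sources with no A_l factor). -/
noncomputable def origState {ι Z : Type} [Fintype ι] {X Y : ι → Type}
    (ρ : ∀ i, Matrix (X i × Y i) (X i × Y i) ℂ) (τ : Matrix Z Z ℂ) :
    Matrix ((∀ i, X i × Y i) × Z) ((∀ i, X i × Y i) × Z) ℂ :=
  Matrix.of fun p q => (∏ i, ρ i (p.1 i) (q.1 i)) * τ p.2 q.2

/-- The global state after replacing each source ρᵢ, i ∈ S, by σᵢ ⊗ Tr_{A_l}(ρᵢ). -/
noncomputable def newState {ι Z : Type} [Fintype ι] [DecidableEq ι] {X Y : ι → Type}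
    [∀ i, Fintype (X i)] [∀ i, Fintype (Y i)]
    (ρ : ∀ i, Matrix (X i × Y i) (X i × Y i) ℂ) (τ : Matrix Z Z ℂ) (S : Finset ι) :
    Matrix ((∀ i, X i × Y i) × Z) ((∀ i, X i × Y i) × Z) ℂ :=
  Matrix.of fun p q =>
    (∏ i, if i ∈ S then
        trYfac (ρ i) (p.1 i).1 (q.1 i).1 * trXfac (ρ i) (p.1 i).2 (q.1 i).2
      else ρ i (p.1 i) (q.1 i)) * τ p.2 q.2

/-- Partial trace of the global state over A_l's total space ∏ᵢ X i. -/
noncomputable def trAl {ι Z : Type} [Fintype ι] [DecidableEq ι] {X Y : ι → Type}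
    [∀ i, Fintype (X i)]
    (G : Matrix ((∀ i, X i × Y i) × Z) ((∀ i, X i × Y i) × Z) ℂ) :
    Matrix ((∀ i, Y i) × Z) ((∀ i, Y i) × Z) ℂ :=
  Matrix.of fun p q =>
    ∑ x : ∀ i, X i, G (fun i => (x i, p.1 i), p.2) (fun i => (x i, q.1 i), q.2)

/-- The global measurement operator E_{a_l} ⊗ (⊗_{j≠l} E_{a_j}), where E_{a_l} acts
on A_l's total space ∏ᵢ X i and Erest on the complementary factors. -/
noncomputable def measOp {ι Z : Type} {X Y : ι → Type}
    (El : Matrix (∀ i, X i) (∀ i, X i) ℂ)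
    (Erest : Matrix ((∀ i, Y i) × Z) ((∀ i, Y i) × Z) ℂ) :
    Matrix ((∀ i, X i × Y i) × Z) ((∀ i, X i × Y i) × Z) ℂ :=
  Matrix.of fun p q =>
    El (fun i => (p.1 i).1) (fun i => (q.1 i).1) *
      Erest (fun i => (p.1 i).2, p.2) (fun i => (q.1 i).2, q.2)

private def pairSwapEquiv {ι Z : Type} {X Y : ι → Type} :
    (((∀ i, X i × Y i) × Z) × ((∀ i, X i × Y i) × Z)) ≃
      ((((∀ i, Y i) × Z) × ((∀ i, Y i) × Z)) × ((∀ i, X i) × (∀ i, X i))) where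
  toFun pq := (((fun i => (pq.1.1 i).2, pq.1.2), (fun i => (pq.2.1 i).2, pq.2.2)),
    (fun i => (pq.1.1 i).1, fun i => (pq.2.1 i).1))
  invFun w := ((fun i => (w.2.1 i, w.1.1.1 i), w.1.1.2),
    (fun i => (w.2.2 i, w.1.2.1 i), w.1.2.2))
  left_inv pq := rfl
  right_inv w := rfl

private lemma trace_mul_eq_sum {n : Type} [Fintype n] (A B : Matrix n n ℂ) :
    (A * B).trace = ∑ pq : n × n, A pq.1 pq.2 * B pq.2 pq.1 := by
  rw [Fintype.sum_prod_type]
  simp [Matrix.trace, Matrix.mul_apply]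

/-- Key factorization step of Theorem 1: after the latent splittings on the edges
from the sources in S to the party A_l, the global state equals
Tr_{A_l}(⊗ᵢ ρᵢ) ⊗ (⊗_{i∈S} σᵢ), and consequently any outcome probability factorizes
as Tr(Tr_{A_l}(⊗ᵢ ρᵢ) · ⊗_{j≠l} E_{a_j}) · Tr((⊗_{i∈S} σᵢ) · E_{a_l}). -/
theorem latent_splitting_pearl_factorization
    {ι Z : Type} [Fintype ι] [DecidableEq ι] [Fintype Z] [DecidableEq Z]
    {X Y : ι → Type} [∀ i, Fintype (X i)] [∀ i, Fintype (Y i)]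
    (ρ : ∀ i, Matrix (X i × Y i) (X i × Y i) ℂ)
    (hρ : ∀ i, (ρ i).PosSemidef) (hρ1 : ∀ i, (ρ i).trace = 1)
    (τ : Matrix Z Z ℂ) (hτ : τ.PosSemidef) (hτ1 : τ.trace = 1)
    (S : Finset ι) (hS : ∀ i ∉ S, Subsingleton (X i))
    (El : Matrix (∀ i, X i) (∀ i, X i) ℂ) (hEl : El.PosSemidef)
    (Erest : Matrix ((∀ i, Y i) × Z) ((∀ i, Y i) × Z) ℂ) (hErest : Erest.PosSemidef) :
    (∀ p q : (∀ i, X i × Y i) × Z,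
        newState ρ τ S p q
          = trAl (origState ρ τ) (fun i => (p.1 i).2, p.2) (fun i => (q.1 i).2, q.2) *
              ∏ i ∈ S, trYfac (ρ i) (p.1 i).1 (q.1 i).1) ∧
    (newState ρ τ S * measOp El Erest).trace
      = (trAl (origState ρ τ) * Erest).trace *
        ((Matrix.of fun x x' : ∀ i, X i => ∏ i ∈ S, trYfac (ρ i) (x i) (x' i)) * El).trace := by
  classical
  have key : ∀ p q : (∀ i, X i × Y i) × Z,
      newState ρ τ S p q
        = trAl (origState ρ τ) (fun i => (p.1 i).2, p.2) (fun i => (q.1 i).2, q.2) *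
            ∏ i ∈ S, trYfac (ρ i) (p.1 i).1 (q.1 i).1 := by
    intro p q
    have hout : ∀ i ∉ S, ρ i (p.1 i) (q.1 i) = trXfac (ρ i) (p.1 i).2 (q.1 i).2 := by
      intro i hi
      haveI := hS i hi
      haveI : Unique (X i) := uniqueOfSubsingleton (p.1 i).1
      show _ = ∑ x, ρ i (x, (p.1 i).2) (x, (q.1 i).2)
      rw [Fintype.sum_unique (fun x => ρ i (x, (p.1 i).2) (x, (q.1 i).2))]
      congr 1
      · exact Prod.ext (Subsingleton.elim _ _) rfl
      · exact Prod.ext (Subsingleton.elim _ _) rfl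
    have htrAl : trAl (origState ρ τ) (fun i => (p.1 i).2, p.2) (fun i => (q.1 i).2, q.2)
        = (∏ i, trXfac (ρ i) (p.1 i).2 (q.1 i).2) * τ p.2 q.2 := by
      simp only [trAl, origState, Matrix.of_apply, trXfac]
      rw [← Finset.sum_mul]
      congr 1
      exact (Fintype.prod_sum fun i xi => ρ i (xi, (p.1 i).2) (xi, (q.1 i).2)).symm
    rw [htrAl, newState]
    have hprod : (∏ i, if i ∈ S then
          trYfac (ρ i) (p.1 i).1 (q.1 i).1 * trXfac (ρ i) (p.1 i).2 (q.1 i).2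
        else ρ i (p.1 i) (q.1 i))
        = (∏ i ∈ S, trYfac (ρ i) (p.1 i).1 (q.1 i).1) *
            ∏ i, trXfac (ρ i) (p.1 i).2 (q.1 i).2 := by
      rw [← Fintype.prod_ite_mem S (fun i => trYfac (ρ i) (p.1 i).1 (q.1 i).1),
        ← Finset.prod_mul_distrib]
      refine Finset.prod_congr rfl fun i _ => ?_
      by_cases hi : i ∈ S
      · simp [hi]
      · simp [hi, hout i hi]
    simp only [Matrix.of_apply, hprod]
    ring
  refine ⟨key, ?_⟩
  have combine : ∀ {α β : Type} [Fintype α] [Fintype β] (f : α → ℂ) (g : β → ℂ),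
      (∑ a, f a) * (∑ b, g b) = ∑ w : α × β, f w.1 * g w.2 := by
    intro α β _ _ f g
    rw [Fintype.sum_mul_sum]
    exact (Fintype.sum_prod_type (fun w : α × β => f w.1 * g w.2)).symm
  rw [trace_mul_eq_sum, trace_mul_eq_sum, trace_mul_eq_sum, combine]
  refine Fintype.sum_equiv pairSwapEquiv _ _ fun pq => ?_
  rw [key]
  simp only [measOp, Matrix.of_apply, pairSwapEquiv, Equiv.coe_fn_mk]
  ring
end
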